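/- The functional f ↦ ‖A(f,g)‖_{L^p(Ω)} is sequentially weakly continuous on L^2(R^d): if f^{(n)} ⇀ f weakly in L^2(R^d) then ‖A(f^{(n)}, g)‖_{L^p(Ω)} → ‖A(f,g)‖_{L^p(Ω)}, for any fixed g ∈ L^2(R^d), Ω ⊂ R^{2d} of finite measure, and 1 ≤ p < ∞. -/

import Mathlib

/-!
Substituting `t ↦ t - x/2` writes `A(h, g)(x, ω) = e^{πi⟨x, ω⟩} ⟪π(x, ω) g, h⟫` with the
time–frequency shift `π(x, ω) g = tfShift x ω g`, an isometry of `L²`. Hence for fixed `(x, ω)`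
the value `A(F n, g)(x, ω)` is the pairing of `F n` with a fixed `L²` function, and weak
convergence gives pointwise convergence `A(F n, g) → A(f, g)`. A weakly convergent sequence is
bounded (Banach–Steinhaus), so Cauchy–Schwarz bounds `|A(F n, g)|` uniformly, and dominated
convergence on the finite-measure set `Ω` concludes.
-/

open MeasureTheory Complex Filter Real

noncomputable def amb {d : ℕ} (f g : EuclideanSpace ℝ (Fin d) → ℂ)
    (x ω : EuclideanSpace ℝ (Fin d)) : ℂ :=
  ∫ t : EuclideanSpace ℝ (Fin d),
    f (t + (2:ℝ)⁻¹ • x) * (starRingEnd ℂ) (g (t - (2:ℝ)⁻¹ • x)) *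
      Complex.exp (-(2 * Real.pi * Complex.I) * ((inner ℝ t ω : ℝ) : ℂ))

noncomputable def tfShift {d : ℕ} (x ω : EuclideanSpace ℝ (Fin d))
    (f : EuclideanSpace ℝ (Fin d) → ℂ) : EuclideanSpace ℝ (Fin d) → ℂ :=
  fun t => Complex.exp ((2 * Real.pi * Complex.I) * ((inner ℝ t ω : ℝ) : ℂ)) * f (t - x)

open ComplexConjugate Topology

section L2Pairing

variable {α : Type*} [MeasurableSpace α] {μ : Measure α}

lemma integral_mul_conj_eq_inner {h ψ : α → ℂ} (hh : MemLp h 2 μ) (hψ : MemLp ψ 2 μ) :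
    ∫ t, h t * conj (ψ t) ∂μ = inner ℂ (hψ.toLp ψ) (hh.toLp h) := by
  rw [L2.inner_def]
  refine integral_congr_ae ?_
  filter_upwards [hψ.coeFn_toLp, hh.coeFn_toLp] with t hψt hht
  simp [RCLike.inner_apply, hψt, hht]

lemma integrable_mul_conj {h ψ : α → ℂ} (hh : MemLp h 2 μ) (hψ : MemLp ψ 2 μ) :
    Integrable (fun t => h t * conj (ψ t)) μ := by
  refine (L2.integrable_inner (𝕜 := ℂ) (hψ.toLp ψ) (hh.toLp h)).congr ?_
  filter_upwards [hψ.coeFn_toLp, hh.coeFn_toLp] with t hψt hht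
  simp [RCLike.inner_apply, hψt, hht]

lemma norm_integral_mul_conj_le {h ψ : α → ℂ} (hh : MemLp h 2 μ) (hψ : MemLp ψ 2 μ) :
    ‖∫ t, h t * conj (ψ t) ∂μ‖ ≤ (eLpNorm h 2 μ).toReal * (eLpNorm ψ 2 μ).toReal := by
  rw [integral_mul_conj_eq_inner hh hψ, mul_comm, ← Lp.norm_toLp h hh, ← Lp.norm_toLp ψ hψ]
  exact norm_inner_le_norm _ _

lemma tendsto_integral_mul_conj_of_tendsto_sub {F : ℕ → α → ℂ} {f ψ : α → ℂ}
    (hF : ∀ n, MemLp (F n) 2 μ) (hf : MemLp f 2 μ) (hψ : MemLp ψ 2 μ)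
    (hweak : Tendsto (fun n => ∫ t, (F n t - f t) * conj (ψ t) ∂μ) atTop (𝓝 0)) :
    Tendsto (fun n => ∫ t, F n t * conj (ψ t) ∂μ) atTop (𝓝 (∫ t, f t * conj (ψ t) ∂μ)) := by
  have hsub : ∀ n, ∫ t, (F n t - f t) * conj (ψ t) ∂μ
      = (∫ t, F n t * conj (ψ t) ∂μ) - ∫ t, f t * conj (ψ t) ∂μ := fun n => by
    simp only [sub_mul]
    exact integral_sub (integrable_mul_conj (hF n) hψ) (integrable_mul_conj hf hψ)
  simp only [hsub] at hweak
  simpa using hweak.add_const (∫ t, f t * conj (ψ t) ∂μ)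

lemma exists_eLpNorm_le_of_weak_tendsto {F : ℕ → α → ℂ} {f : α → ℂ}
    (hF : ∀ n, MemLp (F n) 2 μ) (hf : MemLp f 2 μ)
    (hweak : ∀ ψ : α → ℂ, MemLp ψ 2 μ →
      Tendsto (fun n => ∫ t, (F n t - f t) * conj (ψ t) ∂μ) atTop (𝓝 0)) :
    ∃ M, ∀ n, (eLpNorm (F n) 2 μ).toReal ≤ M := by
  have hpointwise : ∀ ψ : Lp ℂ 2 μ, ∃ C, ∀ n, ‖innerSL ℂ ((hF n).toLp (F n)) ψ‖ ≤ C := by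
    intro ψ
    have hψ : MemLp ψ 2 μ := Lp.memLp ψ
    obtain ⟨C, hC⟩ :=
      (tendsto_integral_mul_conj_of_tendsto_sub hF hf hψ (hweak ψ hψ)).norm.bddAbove_range
    refine ⟨C, fun n => ?_⟩
    rw [innerSL_apply_apply, ← inner_conj_symm, RCLike.norm_conj, ← Lp.toLp_coeFn ψ hψ,
      ← integral_mul_conj_eq_inner (hF n) hψ]
    exact hC (Set.mem_range_self n)
  obtain ⟨M, hM⟩ := banach_steinhaus hpointwise
  exact ⟨M, fun n => by rw [← Lp.norm_toLp _ (hF n), ← innerSL_apply_norm ℂ]; exact hM n⟩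

end L2Pairing

lemma tendsto_integral_norm_rpow_rpow_inv {α E : Type*} [MeasurableSpace α] {μ : Measure α}
    [IsFiniteMeasure μ] [NormedAddCommGroup E] {G : ℕ → α → E} {g : α → E} {C p : ℝ}
    (hp : 0 ≤ p) (hG : ∀ n, AEStronglyMeasurable (G n) μ) (hC : ∀ n x, ‖G n x‖ ≤ C)
    (hlim : ∀ x, Tendsto (fun n => G n x) atTop (𝓝 (g x))) :
    Tendsto (fun n => (∫ x, ‖G n x‖ ^ p ∂μ) ^ (1 / p)) atTop
      (𝓝 ((∫ x, ‖g x‖ ^ p ∂μ) ^ (1 / p))) := by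
  refine Tendsto.rpow_const ?_ (Or.inr (by positivity))
  refine tendsto_integral_of_dominated_convergence (fun _ => C ^ p)
    (fun n => ((continuous_rpow_const hp).comp_aestronglyMeasurable (hG n).norm))
    (integrable_const _) (fun n => Eventually.of_forall fun x => ?_)
    (Eventually.of_forall fun x => (hlim x).norm.rpow_const (Or.inr hp))
  rw [norm_eq_abs, abs_of_nonneg (by positivity)]
  exact rpow_le_rpow (norm_nonneg _) (hC n x) hp

section TimeFrequency

variable {d : ℕ}

local notation "ℝᵈ" => EuclideanSpace ℝ (Fin d)

lemma norm_tfShift_apply (x ω : ℝᵈ) (g : ℝᵈ → ℂ) (t : ℝᵈ) :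
    ‖tfShift x ω g t‖ = ‖g (t - x)‖ := by
  simp [tfShift, Complex.norm_exp, Complex.mul_re]

lemma MeasureTheory.AEStronglyMeasurable.tfShift {g : ℝᵈ → ℂ}
    (hg : AEStronglyMeasurable g volume) (x ω : ℝᵈ) :
    AEStronglyMeasurable (tfShift x ω g) volume :=
  (Continuous.aestronglyMeasurable (by fun_prop)).mul <|
    hg.comp_quasiMeasurePreserving (measurePreserving_sub_right volume x).quasiMeasurePreserving

lemma eLpNorm_tfShift {g : ℝᵈ → ℂ} (hg : AEStronglyMeasurable g volume) (p : ENNReal)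
    (x ω : ℝᵈ) : eLpNorm (tfShift x ω g) p volume = eLpNorm g p volume := by
  rw [eLpNorm_congr_norm_ae (Eventually.of_forall (norm_tfShift_apply x ω g))]
  exact eLpNorm_comp_measurePreserving hg (measurePreserving_sub_right volume x)

lemma MeasureTheory.MemLp.tfShift {g : ℝᵈ → ℂ} {p : ENNReal} (hg : MemLp g p volume)
    (x ω : ℝᵈ) :
    MemLp (tfShift x ω g) p volume :=
  ⟨hg.1.tfShift x ω, by rw [eLpNorm_tfShift hg.1]; exact hg.2⟩

lemma amb_eq_exp_mul_integral_tfShift (h g : ℝᵈ → ℂ) (x ω : ℝᵈ) :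
    amb h g x ω = Complex.exp ((π * I) * ((inner ℝ x ω : ℝ) : ℂ)) *
      ∫ s, h s * conj (tfShift x ω g s) := by
  set c : ℝᵈ := (2:ℝ)⁻¹ • x with hc
  rw [amb, ← integral_sub_right_eq_self _ c, ← integral_const_mul]
  congr 1
  funext s
  have hplus : s - c + c = s := by module
  have hminus : s - c - c = s - x := by rw [hc]; module
  have hinner : (inner ℝ (s - c) ω : ℝ) = inner ℝ s ω - 2⁻¹ * inner ℝ x ω := by
    rw [hc, inner_sub_left, real_inner_smul_left]
  have hexp : Complex.exp (-(2 * π * I) * ((inner ℝ s ω - 2⁻¹ * inner ℝ x ω : ℝ) : ℂ))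
      = Complex.exp ((π * I) * ((inner ℝ x ω : ℝ) : ℂ)) *
        conj (Complex.exp ((2 * π * I) * ((inner ℝ s ω : ℝ) : ℂ))) := by
    rw [← Complex.exp_conj, ← Complex.exp_add]
    simp only [map_mul, conj_I, conj_ofReal, map_ofNat]
    push_cast
    ring_nf
  rw [hplus, hminus, hinner, hexp, tfShift, map_mul]
  ring

lemma norm_amb_le {h g : ℝᵈ → ℂ} (hh : MemLp h 2 volume) (hg : MemLp g 2 volume) (x ω : ℝᵈ) :
    ‖amb h g x ω‖ ≤ (eLpNorm h 2 volume).toReal * (eLpNorm g 2 volume).toReal := by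
  rw [amb_eq_exp_mul_integral_tfShift, norm_mul, Complex.norm_exp, ← eLpNorm_tfShift hg.1 2 x ω]
  simpa [Complex.mul_re] using norm_integral_mul_conj_le hh (hg.tfShift x ω)

lemma tendsto_amb_of_weak_tendsto {F : ℕ → ℝᵈ → ℂ} {f g : ℝᵈ → ℂ}
    (hF : ∀ n, MemLp (F n) 2 volume) (hf : MemLp f 2 volume) (hg : MemLp g 2 volume)
    (hweak : ∀ ψ : ℝᵈ → ℂ, MemLp ψ 2 volume →
      Tendsto (fun n => ∫ t, (F n t - f t) * conj (ψ t)) atTop (𝓝 0)) (x ω : ℝᵈ) :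
    Tendsto (fun n => amb (F n) g x ω) atTop (𝓝 (amb f g x ω)) := by
  have hψ := hg.tfShift x ω
  simp only [amb_eq_exp_mul_integral_tfShift]
  exact (tendsto_integral_mul_conj_of_tendsto_sub hF hf hψ (hweak _ hψ)).const_mul _

lemma quasiMeasurePreserving_add_smul_fst (c : ℝ) :
    Measure.QuasiMeasurePreserving (fun q : (ℝᵈ × ℝᵈ) × ℝᵈ => q.2 + c • q.1.1)
      ((volume : Measure (ℝᵈ × ℝᵈ)).prod volume) volume := by
  have hshear : MeasurePreserving (fun q : (ℝᵈ × ℝᵈ) × ℝᵈ => (q.1, q.2 + c • q.1.1))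
      ((volume : Measure (ℝᵈ × ℝᵈ)).prod volume) ((volume : Measure (ℝᵈ × ℝᵈ)).prod volume) :=
    (MeasurePreserving.id volume).skew_product (g := fun (w : ℝᵈ × ℝᵈ) (t : ℝᵈ) => t + c • w.1)
      (continuous_snd.add (continuous_fst.fst.const_smul c)).measurable
      (Eventually.of_forall fun w => (measurePreserving_add_right volume (c • w.1)).map_eq)
  exact Measure.quasiMeasurePreserving_snd.comp hshear.quasiMeasurePreserving

lemma aestronglyMeasurable_amb {h g : ℝᵈ → ℂ} (hh : AEStronglyMeasurable h volume)
    (hg : AEStronglyMeasurable g volume) :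
    AEStronglyMeasurable (fun w : ℝᵈ × ℝᵈ => amb h g w.1 w.2) volume := by
  have hplus := hh.comp_quasiMeasurePreserving (quasiMeasurePreserving_add_smul_fst (2⁻¹))
  have hminus := hg.comp_quasiMeasurePreserving (quasiMeasurePreserving_add_smul_fst (-2⁻¹))
  have hexp : Continuous fun q : (ℝᵈ × ℝᵈ) × ℝᵈ =>
      Complex.exp (-(2 * π * I) * ((inner ℝ q.2 q.1.2 : ℝ) : ℂ)) := by
    fun_prop
  refine AEStronglyMeasurable.integral_prod_right' (f := fun q : (ℝᵈ × ℝᵈ) × ℝᵈ =>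
    h (q.2 + (2:ℝ)⁻¹ • q.1.1) * conj (g (q.2 - (2:ℝ)⁻¹ • q.1.1)) *
      Complex.exp (-(2 * π * I) * ((inner ℝ q.2 q.1.2 : ℝ) : ℂ))) ?_
  refine (hplus.mul (Complex.continuous_conj.comp_aestronglyMeasurable ?_)).mul
    hexp.aestronglyMeasurable
  simpa only [Function.comp_def, neg_smul, ← sub_eq_add_neg] using hminus

end TimeFrequency

theorem functional_weakly_continuous_general {d : ℕ}
    (g : EuclideanSpace ℝ (Fin d) → ℂ) (hg : MemLp g 2 volume)
    (Ω : Set (EuclideanSpace ℝ (Fin d) × EuclideanSpace ℝ (Fin d)))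
    (hΩfin : volume Ω < ⊤)
    (p : ℝ) (hp : 1 ≤ p)
    (F : ℕ → EuclideanSpace ℝ (Fin d) → ℂ) (hF : ∀ n, MemLp (F n) 2 volume)
    (f : EuclideanSpace ℝ (Fin d) → ℂ) (hf : MemLp f 2 volume)
    (hweak : ∀ ψ : EuclideanSpace ℝ (Fin d) → ℂ, MemLp ψ 2 volume →
      Tendsto (fun n => ∫ t, (F n t - f t) * (starRingEnd ℂ) (ψ t)) atTop (nhds 0)) :
    Tendsto (fun n => (∫ w in Ω, ‖amb (F n) g w.1 w.2‖ ^ p) ^ (1/p)) atTop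
      (nhds ((∫ w in Ω, ‖amb f g w.1 w.2‖ ^ p) ^ (1/p))) := by
  obtain ⟨M, hM⟩ := exists_eLpNorm_le_of_weak_tendsto hF hf hweak
  have : IsFiniteMeasure (volume.restrict Ω) := isFiniteMeasure_restrict.2 hΩfin.ne
  exact tendsto_integral_norm_rpow_rpow_inv (zero_le_one.trans hp)
    (fun n => (aestronglyMeasurable_amb (hF n).1 hg.1).restrict)
    (fun n w => (norm_amb_le (hF n) hg w.1 w.2).trans
      (mul_le_mul_of_nonneg_right (hM n) ENNReal.toReal_nonneg))
    (fun w => tendsto_amb_of_weak_tendsto hF hf hg hweak w.1 w.2)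

theorem functional_weakly_continuous {d : ℕ}
    (g : EuclideanSpace ℝ (Fin d) → ℂ) (hg : MemLp g 2 volume)
    (Ω : Set (EuclideanSpace ℝ (Fin d) × EuclideanSpace ℝ (Fin d)))
    (hΩm : MeasurableSet Ω) (hΩfin : volume Ω < ⊤)
    (p : ℝ) (hp : 1 ≤ p)
    (F : ℕ → EuclideanSpace ℝ (Fin d) → ℂ) (hF : ∀ n, MemLp (F n) 2 volume)
    (f : EuclideanSpace ℝ (Fin d) → ℂ) (hf : MemLp f 2 volume)
    (hweak : ∀ ψ : EuclideanSpace ℝ (Fin d) → ℂ, MemLp ψ 2 volume →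
      Tendsto (fun n => ∫ t, (F n t - f t) * (starRingEnd ℂ) (ψ t)) atTop (nhds 0)) :
    Tendsto (fun n => (∫ w in Ω, ‖amb (F n) g w.1 w.2‖ ^ p) ^ (1/p)) atTop
      (nhds ((∫ w in Ω, ‖amb f g w.1 w.2‖ ^ p) ^ (1/p))) :=
  functional_weakly_continuous_general g hg Ω hΩfin p hp F hF f hf hweak
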